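/- Fix n ≥ 1 and a symmetric matrix C_e ∈ ℝ^{n×n}, and set L_C := (2√n + 8)·‖C_e‖₂². Let M be orthogonal, Ω := Ω(M), and let 0 < η < 1/L_C. Then the Cayley step M⁺ := M · Cay(η Ω), with Cay(X) := (I − X/2)⁻¹(I + X/2), satisfies the descent inequality f(M⁺) ≤ f(M) − η·(1 − η L_C/2)·‖Ω‖_F². -/

import Mathlib

open Matrix

/-- The diagonal matrix whose diagonal agrees with `X`. -/
noncomputable def diagPart {n : ℕ} (X : Matrix (Fin n) (Fin n) ℝ) :
    Matrix (Fin n) (Fin n) ℝ :=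
  Matrix.diagonal (fun i => X i i)

/-- Frobenius norm of a real square matrix. -/
noncomputable def frobNorm {n : ℕ} (X : Matrix (Fin n) (Fin n) ℝ) : ℝ :=
  Real.sqrt (∑ i, ∑ j, (X i j) ^ 2)

/-- Spectral (ℓ²-operator) norm of a real square matrix. -/
noncomputable def specNorm {n : ℕ} (X : Matrix (Fin n) (Fin n) ℝ) : ℝ :=
  ‖LinearMap.toContinuousLinearMap (Matrix.toEuclideanLin X)‖

/-- Rotated covariance `A(M) = Mᵀ C_e M`. -/
noncomputable def rotA {n : ℕ} (Ce M : Matrix (Fin n) (Fin n) ℝ) :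
    Matrix (Fin n) (Fin n) ℝ := Mᵀ * Ce * M

/-- The commutator generator `Ω(M) = A D − D A`. -/
noncomputable def genOmega {n : ℕ} (Ce M : Matrix (Fin n) (Fin n) ℝ) :
    Matrix (Fin n) (Fin n) ℝ :=
  rotA Ce M * diagPart (rotA Ce M) - diagPart (rotA Ce M) * rotA Ce M

/-- The diagonalization objective `f(M) = (1/2)‖off(A(M))‖_F²`. -/
noncomputable def objF {n : ℕ} (Ce M : Matrix (Fin n) (Fin n) ℝ) : ℝ :=
  (1 / 2) * frobNorm (rotA Ce M - diagPart (rotA Ce M)) ^ 2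

/-- The Cayley map `Cay(X) = (I − X/2)⁻¹ (I + X/2)`. -/
noncomputable def cayley {n : ℕ} (X : Matrix (Fin n) (Fin n) ℝ) :
    Matrix (Fin n) (Fin n) ℝ :=
  (1 - (1 / 2 : ℝ) • X)⁻¹ * (1 + (1 / 2 : ℝ) • X)

/-!
Write `A = Mᵀ C_e M`, `D = diag A`, `Ω = AD − DA` and `Cay(ηΩ) = 1 + P`. The Cayley step is
orthogonal, so it preserves `‖A‖_F` and `f` can only move through the diagonal:
`f(M⁺) ≤ f(M) − tr(D (Cay(ηΩ)ᵀ A Cay(ηΩ) − A)) = f(M) − 2 tr(DAP) − tr(DPᵀAP)`.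
Since `P = ηΩ + (η/2) Ω P`, the leading term is `2η tr(DAΩ) = η‖Ω‖_F²`. Everything else is
controlled by `‖XY‖_F ≤ ‖X‖₂ ‖Y‖_F`, Cauchy–Schwarz for the trace, `‖D‖₂ ≤ ‖A‖₂ ≤ ‖C_e‖₂` and
`‖P‖_F ≤ (8/7) η ‖Ω‖_F` (from `η ‖Ω‖₂ ≤ 2η‖C_e‖₂² ≤ 1/4`); it costs at most
`4 η² ‖C_e‖₂² ‖Ω‖_F² ≤ η² L_C ‖Ω‖_F² / 2`.
-/

variable {n : ℕ}

section Frobenius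

attribute [local instance] Matrix.frobeniusNormedAddCommGroup Matrix.frobeniusNormedSpace

lemma frobNorm_eq_norm (X : Matrix (Fin n) (Fin n) ℝ) : frobNorm X = ‖X‖ := by
  simp [frobNorm, frobenius_norm_def, Real.sqrt_eq_rpow]

lemma frobNorm_nonneg (X : Matrix (Fin n) (Fin n) ℝ) : 0 ≤ frobNorm X :=
  Real.sqrt_nonneg _

lemma frobNorm_add_le (X Y : Matrix (Fin n) (Fin n) ℝ) :
    frobNorm (X + Y) ≤ frobNorm X + frobNorm Y := by
  simpa only [frobNorm_eq_norm] using norm_add_le X Y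

lemma frobNorm_smul (t : ℝ) (X : Matrix (Fin n) (Fin n) ℝ) :
    frobNorm (t • X) = |t| * frobNorm X := by
  simp only [frobNorm_eq_norm, norm_smul, Real.norm_eq_abs]

lemma frobNorm_transpose (X : Matrix (Fin n) (Fin n) ℝ) : frobNorm Xᵀ = frobNorm X := by
  simpa only [frobNorm_eq_norm] using frobenius_norm_transpose X

end Frobenius

lemma frobNorm_sq (X : Matrix (Fin n) (Fin n) ℝ) :
    frobNorm X ^ 2 = ∑ i, ∑ j, X i j ^ 2 :=
  Real.sq_sqrt <| Finset.sum_nonneg fun _ _ => Finset.sum_nonneg fun _ _ => sq_nonneg _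

lemma frobNorm_sq_eq_trace (X : Matrix (Fin n) (Fin n) ℝ) :
    frobNorm X ^ 2 = (Xᵀ * X).trace := by
  rw [frobNorm_sq, Finset.sum_comm]
  simp [trace, mul_apply, sq]

lemma abs_trace_mul_le_frobNorm_mul (X Y : Matrix (Fin n) (Fin n) ℝ) :
    |(X * Y).trace| ≤ frobNorm X * frobNorm Y := by
  have h := Finset.sum_mul_sq_le_sq_mul_sq Finset.univ
    (fun p : Fin n × Fin n => X p.1 p.2) (fun p => Y p.2 p.1)
  simp only [← Finset.univ_product_univ, Finset.sum_product] at h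
  rw [frobNorm, frobNorm, ← Real.sqrt_mul (by positivity),
    Finset.sum_comm (f := fun i j => Y i j ^ 2)]
  refine Real.abs_le_sqrt ?_
  simpa [trace, mul_apply] using h

lemma frobNorm_sub_diagPart_sq (X : Matrix (Fin n) (Fin n) ℝ) :
    frobNorm (X - diagPart X) ^ 2 = frobNorm X ^ 2 - ∑ i, X i i ^ 2 := by
  have h : ∀ i j, (X - diagPart X) i j ^ 2 = X i j ^ 2 - if i = j then X i i ^ 2 else 0 := by
    intro i j
    by_cases hij : i = j
    · subst hij; simp [diagPart]
    · simp [diagPart, hij]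
  simp only [frobNorm_sq, h, Finset.sum_sub_distrib, Finset.sum_ite_eq, Finset.mem_univ, if_true]

section Spectral

open scoped Matrix.Norms.L2Operator

lemma specNorm_eq_norm (X : Matrix (Fin n) (Fin n) ℝ) : specNorm X = ‖X‖ := rfl

lemma specNorm_nonneg (X : Matrix (Fin n) (Fin n) ℝ) : 0 ≤ specNorm X := norm_nonneg _

lemma specNorm_transpose (X : Matrix (Fin n) (Fin n) ℝ) : specNorm Xᵀ = specNorm X := by
  simpa [specNorm_eq_norm] using l2_opNorm_conjTranspose X

lemma specNorm_smul (t : ℝ) (X : Matrix (Fin n) (Fin n) ℝ) :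
    specNorm (t • X) = |t| * specNorm X := by
  simp only [specNorm_eq_norm, norm_smul, Real.norm_eq_abs]

lemma specNorm_mul_le (X Y : Matrix (Fin n) (Fin n) ℝ) :
    specNorm (X * Y) ≤ specNorm X * specNorm Y :=
  norm_mul_le X Y

lemma specNorm_mul_sub_mul_le (X Y : Matrix (Fin n) (Fin n) ℝ) :
    specNorm (X * Y - Y * X) ≤ 2 * specNorm X * specNorm Y := by
  calc specNorm (X * Y - Y * X) ≤ specNorm X * specNorm Y + specNorm Y * specNorm X :=
        (norm_sub_le (X * Y) (Y * X)).trans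
          (add_le_add (specNorm_mul_le X Y) (specNorm_mul_le Y X))
    _ = 2 * specNorm X * specNorm Y := by ring

lemma specNorm_le_one_of_transpose_mul_self {Q : Matrix (Fin n) (Fin n) ℝ} (hQ : Qᵀ * Q = 1) :
    specNorm Q ≤ 1 := by
  have h := l2_opNorm_conjTranspose_mul_self Q
  rw [conjTranspose_eq_transpose_of_trivial, hQ] at h
  have h1 : ‖(1 : Matrix (Fin n) (Fin n) ℝ)‖ ≤ 1 := by
    rw [← diagonal_one, l2_opNorm_diagonal]
    exact (pi_norm_le_iff_of_nonneg zero_le_one).mpr fun i => by simp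
  rw [specNorm_eq_norm]
  nlinarith [norm_nonneg Q]

lemma sum_sq_mulVec_le_specNorm_sq_mul (B : Matrix (Fin n) (Fin n) ℝ) (v : Fin n → ℝ) :
    ∑ i, (B *ᵥ v) i ^ 2 ≤ specNorm B ^ 2 * ∑ i, v i ^ 2 := by
  have h := pow_le_pow_left₀ (norm_nonneg _) (l2_opNorm_mulVec B (WithLp.toLp 2 v)) 2
  rw [mul_pow, EuclideanSpace.norm_sq_eq, EuclideanSpace.norm_sq_eq] at h
  simpa [specNorm_eq_norm] using h

lemma abs_apply_le_specNorm (X : Matrix (Fin n) (Fin n) ℝ) (i j : Fin n) :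
    |X i j| ≤ specNorm X := by
  rw [specNorm_eq_norm]
  simpa using (PiLp.norm_apply_le _ i).trans (l2_opNorm_mulVec X (EuclideanSpace.single j 1))

lemma specNorm_diagPart_le (X : Matrix (Fin n) (Fin n) ℝ) :
    specNorm (diagPart X) ≤ specNorm X := by
  rw [specNorm_eq_norm, diagPart, l2_opNorm_diagonal,
    pi_norm_le_iff_of_nonneg (specNorm_nonneg X)]
  exact fun i => abs_apply_le_specNorm X i i

end Spectral

lemma frobNorm_mul_le_of_specNorm_le_left {B : Matrix (Fin n) (Fin n) ℝ} {c : ℝ}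
    (hB : specNorm B ≤ c) (Z : Matrix (Fin n) (Fin n) ℝ) :
    frobNorm (B * Z) ≤ c * frobNorm Z := by
  have hc : 0 ≤ c := (specNorm_nonneg B).trans hB
  refine (sq_le_sq₀ (frobNorm_nonneg _) (mul_nonneg hc (frobNorm_nonneg Z))).mp ?_
  rw [mul_pow, frobNorm_sq, frobNorm_sq, Finset.sum_comm,
    Finset.sum_comm (f := fun i j => Z i j ^ 2), Finset.mul_sum]
  refine Finset.sum_le_sum fun j _ => ?_
  calc ∑ i, (B * Z) i j ^ 2 = ∑ i, (B *ᵥ fun k => Z k j) i ^ 2 := by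
        simp [mul_apply, mulVec, dotProduct]
    _ ≤ specNorm B ^ 2 * ∑ i, Z i j ^ 2 := sum_sq_mulVec_le_specNorm_sq_mul B _
    _ ≤ c ^ 2 * ∑ i, Z i j ^ 2 := by gcongr; exact specNorm_nonneg B

lemma frobNorm_mul_le_of_specNorm_le_right {B : Matrix (Fin n) (Fin n) ℝ} {c : ℝ}
    (hB : specNorm B ≤ c) (Z : Matrix (Fin n) (Fin n) ℝ) :
    frobNorm (Z * B) ≤ frobNorm Z * c := by
  rw [← frobNorm_transpose, transpose_mul, mul_comm, ← frobNorm_transpose Z]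
  exact frobNorm_mul_le_of_specNorm_le_left ((specNorm_transpose B).trans_le hB) _

lemma frobNorm_conj_of_transpose_mul_self {Q : Matrix (Fin n) (Fin n) ℝ} (hQ : Qᵀ * Q = 1)
    (A : Matrix (Fin n) (Fin n) ℝ) : frobNorm (Qᵀ * A * Q) = frobNorm A := by
  have hQ' : Q * Qᵀ = 1 := mul_eq_one_comm.mp hQ
  have h : (Qᵀ * A * Q)ᵀ * (Qᵀ * A * Q) = Qᵀ * (Aᵀ * A * Q) := by
    simp only [transpose_mul, transpose_transpose, Matrix.mul_assoc]
    rw [← Matrix.mul_assoc Q Qᵀ, hQ', Matrix.one_mul]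
  rw [← sq_eq_sq₀ (frobNorm_nonneg _) (frobNorm_nonneg _), frobNorm_sq_eq_trace,
    frobNorm_sq_eq_trace, h, trace_mul_comm, Matrix.mul_assoc, hQ', Matrix.mul_one]

lemma half_frobNorm_sub_diagPart_sq_le {A B : Matrix (Fin n) (Fin n) ℝ}
    (h : frobNorm B = frobNorm A) :
    1 / 2 * frobNorm (B - diagPart B) ^ 2
      ≤ 1 / 2 * frobNorm (A - diagPart A) ^ 2 - (diagPart A * (B - A)).trace := by
  have htr : (diagPart A * (B - A)).trace = ∑ i, A i i * (B i i - A i i) := by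
    simp [diagPart, trace]
  have hdiag : ∑ i, (A i i ^ 2 + 2 * (A i i * (B i i - A i i))) ≤ ∑ i, B i i ^ 2 :=
    Finset.sum_le_sum fun i _ => by nlinarith [sq_nonneg (B i i - A i i)]
  rw [frobNorm_sub_diagPart_sq, frobNorm_sub_diagPart_sq, h, htr]
  rw [Finset.sum_add_distrib, ← Finset.mul_sum] at hdiag
  linarith

lemma diagPart_transpose (X : Matrix (Fin n) (Fin n) ℝ) : (diagPart X)ᵀ = diagPart X :=
  diagonal_transpose _

namespace Matrix

variable {ι R : Type*} [Fintype ι]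

lemma isUnit_det_one_sub_of_transpose_eq_neg [DecidableEq ι] {X : Matrix ι ι ℝ} (hX : Xᵀ = -X) :
    IsUnit (1 - X).det := by
  have hpd : ((1 - X)ᵀ * (1 - X)).PosDef := by
    have h : (1 - X)ᵀ * (1 - X) = 1 + Xᴴ * X := by
      rw [conjTranspose_eq_transpose_of_trivial, transpose_sub, transpose_one, hX]
      noncomm_ring
    rw [h]
    exact PosDef.one.add_posSemidef (posSemidef_conjTranspose_mul_self X)
  have h := hpd.det_pos
  rw [det_mul, det_transpose] at h
  exact isUnit_iff_ne_zero.mpr (mul_self_pos.mp h)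

variable [CommRing R] {A D : Matrix ι ι R}

lemma transpose_mul_sub_mul (hA : Aᵀ = A) (hD : Dᵀ = D) :
    (A * D - D * A)ᵀ = -(A * D - D * A) := by
  rw [transpose_sub, transpose_mul, transpose_mul, hA, hD, neg_sub]

lemma trace_mul_conj_one_add_sub [DecidableEq ι] (hA : Aᵀ = A) (hD : Dᵀ = D)
    (P : Matrix ι ι R) :
    (D * ((1 + P)ᵀ * A * (1 + P) - A)).trace
      = 2 * (D * A * P).trace + (D * Pᵀ * A * P).trace := by
  have hsymm : (D * (Pᵀ * A)).trace = (D * A * P).trace := by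
    rw [← trace_transpose, transpose_mul, transpose_mul, transpose_transpose, hA, hD,
      trace_mul_comm, Matrix.mul_assoc]
  have hexp : D * ((1 + P)ᵀ * A * (1 + P) - A)
      = D * (Pᵀ * A) + D * A * P + D * Pᵀ * A * P := by
    rw [transpose_add, transpose_one]
    noncomm_ring
  rw [hexp, trace_add, trace_add, hsymm]
  ring

end Matrix

lemma trace_mul_mul_commutator {A D : Matrix (Fin n) (Fin n) ℝ} (hA : Aᵀ = A) (hD : Dᵀ = D) :
    (D * A * (A * D - D * A)).trace = frobNorm (A * D - D * A) ^ 2 / 2 := by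
  have hcyc₁ : (A * D * (D * A)).trace = (D * A * (A * D)).trace := trace_mul_comm _ _
  have hcyc₂ : (A * D * (A * D)).trace = (D * A * (D * A)).trace := by
    rw [Matrix.mul_assoc, trace_mul_comm, Matrix.mul_assoc, Matrix.mul_assoc, Matrix.mul_assoc]
  rw [frobNorm_sq_eq_trace, transpose_sub, transpose_mul, transpose_mul, hA, hD]
  simp only [Matrix.sub_mul, Matrix.mul_sub, trace_sub, hcyc₁, hcyc₂]
  ring

section Cayley

variable {X : Matrix (Fin n) (Fin n) ℝ}

lemma one_sub_half_smul_mul_cayley (hX : Xᵀ = -X) :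
    (1 - (1 / 2 : ℝ) • X) * cayley X = 1 + (1 / 2 : ℝ) • X := by
  have hY : ((1 / 2 : ℝ) • X)ᵀ = -((1 / 2 : ℝ) • X) := by rw [transpose_smul, hX, smul_neg]
  rw [cayley, ← Matrix.mul_assoc, mul_nonsing_inv _ (isUnit_det_one_sub_of_transpose_eq_neg hY),
    Matrix.one_mul]

lemma cayley_sub_one (hX : Xᵀ = -X) :
    cayley X - 1 = X + ((1 / 2 : ℝ) • X) * (cayley X - 1) := by
  have h := one_sub_half_smul_mul_cayley hX
  rw [Matrix.sub_mul, Matrix.one_mul] at h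
  rw [Matrix.mul_sub, Matrix.mul_one]
  linear_combination (norm := module) h

lemma cayley_transpose_mul_self (hX : Xᵀ = -X) : (cayley X)ᵀ * cayley X = 1 := by
  set Y := (1 / 2 : ℝ) • X
  have hY : Yᵀ = -Y := by rw [transpose_smul, hX, smul_neg]
  have hsub := isUnit_det_one_sub_of_transpose_eq_neg hY
  have hadd : IsUnit (1 + Y).det := by
    simpa using isUnit_det_one_sub_of_transpose_eq_neg (X := -Y) (by rw [transpose_neg, hY])
  have hC : cayley X = (1 - Y)⁻¹ * (1 + Y) := rfl
  have hT : (cayley X)ᵀ = (1 - Y) * (1 + Y)⁻¹ := by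
    rw [hC, transpose_mul, transpose_nonsing_inv, transpose_add, transpose_sub,
      transpose_one, hY, sub_neg_eq_add, ← sub_eq_add_neg]
  calc (cayley X)ᵀ * cayley X = (1 - Y) * ((1 - Y) * (1 + Y))⁻¹ * (1 + Y) := by
        rw [hT, hC, Matrix.mul_inv_rev]; simp only [Matrix.mul_assoc]
    _ = (1 - Y) * ((1 + Y) * (1 - Y))⁻¹ * (1 + Y) := by
        rw [show (1 - Y) * (1 + Y) = (1 + Y) * (1 - Y) by noncomm_ring]
    _ = 1 := by
        rw [Matrix.mul_inv_rev, ← Matrix.mul_assoc, mul_nonsing_inv _ hsub, Matrix.one_mul,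
          nonsing_inv_mul _ hadd]

lemma frobNorm_cayley_sub_one_le (hX : Xᵀ = -X) :
    (1 - specNorm X / 2) * frobNorm (cayley X - 1) ≤ frobNorm X := by
  have h := frobNorm_add_le X ((1 / 2 : ℝ) • X * (cayley X - 1))
  rw [← cayley_sub_one hX, smul_mul_assoc, frobNorm_smul, abs_of_pos one_half_pos] at h
  have := frobNorm_mul_le_of_specNorm_le_left (le_refl (specNorm X)) (cayley X - 1)
  linarith

end Cayley

lemma frobNorm_cayley_smul_commutator_sub_one_le {A D : Matrix (Fin n) (Fin n) ℝ}
    (hA : Aᵀ = A) (hD : Dᵀ = D) {c η : ℝ} (hAc : specNorm A ≤ c) (hDc : specNorm D ≤ c)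
    (hη : 0 ≤ η) (hηc : η * c ^ 2 ≤ 1 / 8) :
    7 / 8 * frobNorm (cayley (η • (A * D - D * A)) - 1) ≤ η * frobNorm (A * D - D * A) := by
  have h := frobNorm_cayley_sub_one_le <| show (η • (A * D - D * A))ᵀ = -(η • (A * D - D * A)) by
    rw [transpose_smul, transpose_mul_sub_mul hA hD, smul_neg]
  rw [specNorm_smul, frobNorm_smul, abs_of_nonneg hη] at h
  have hc0 : 0 ≤ c := (specNorm_nonneg A).trans hAc
  have hAD : specNorm A * specNorm D ≤ c ^ 2 := by
    rw [sq]; exact mul_le_mul hAc hDc (specNorm_nonneg D) hc0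
  have hΩc := specNorm_mul_sub_mul_le A D
  have hκ : 7 / 8 ≤ 1 - η * specNorm (A * D - D * A) / 2 := by nlinarith
  exact (mul_le_mul_of_nonneg_right hκ (frobNorm_nonneg _)).trans h

lemma trace_diagPart_mul_cayley_conj_sub_ge {A : Matrix (Fin n) (Fin n) ℝ} (hA : Aᵀ = A)
    {c η : ℝ} (hc : specNorm A ≤ c) (hη : 0 ≤ η) (hηc : η * c ^ 2 ≤ 1 / 8) :
    η * (1 - 4 * η * c ^ 2) * frobNorm (A * diagPart A - diagPart A * A) ^ 2
      ≤ (diagPart A * ((cayley (η • (A * diagPart A - diagPart A * A)))ᵀ * A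
          * cayley (η • (A * diagPart A - diagPart A * A)) - A)).trace := by
  set D := diagPart A
  set Ω := A * D - D * A
  set P := cayley (η • Ω) - 1
  have hD : Dᵀ = D := diagPart_transpose A
  have hDc : specNorm D ≤ c := (specNorm_diagPart_le A).trans hc
  have hc0 : 0 ≤ c := (specNorm_nonneg A).trans hc
  have hX : (η • Ω)ᵀ = -(η • Ω) := by rw [transpose_smul, transpose_mul_sub_mul hA hD, smul_neg]
  have hP : 7 / 8 * frobNorm P ≤ η * frobNorm Ω :=
    frobNorm_cayley_smul_commutator_sub_one_le hA hD hc hDc hη hηc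
  have hDAP : (D * A * P).trace = η * (D * A * Ω).trace + η / 2 * (D * A * Ω * P).trace := by
    nth_rewrite 1 [show P = η • Ω + ((1 / 2 : ℝ) • (η • Ω)) * P from cayley_sub_one hX]
    simp only [Matrix.mul_add, smul_mul_assoc, Matrix.mul_smul, trace_add, trace_smul,
      smul_eq_mul, Matrix.mul_assoc]
    ring
  have hE₁ : |(D * A * Ω * P).trace| ≤ c ^ 2 * frobNorm Ω * frobNorm P := by
    refine (abs_trace_mul_le_frobNorm_mul _ _).trans
      (mul_le_mul_of_nonneg_right ?_ (frobNorm_nonneg P))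
    rw [Matrix.mul_assoc]
    calc frobNorm (D * (A * Ω)) ≤ c * (c * frobNorm Ω) :=
          (frobNorm_mul_le_of_specNorm_le_left hDc _).trans
            (mul_le_mul_of_nonneg_left (frobNorm_mul_le_of_specNorm_le_left hc _) hc0)
      _ = c ^ 2 * frobNorm Ω := by ring
  have hE₂ : |(D * Pᵀ * A * P).trace| ≤ c ^ 2 * frobNorm P ^ 2 := by
    refine (abs_trace_mul_le_frobNorm_mul _ _).trans ?_
    have h : frobNorm (D * (Pᵀ * A)) ≤ c * (frobNorm Pᵀ * c) :=
      (frobNorm_mul_le_of_specNorm_le_left hDc _).trans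
        (mul_le_mul_of_nonneg_left (frobNorm_mul_le_of_specNorm_le_right hc _) hc0)
    rw [frobNorm_transpose, ← Matrix.mul_assoc] at h
    nlinarith [frobNorm_nonneg P]
  have herr : c ^ 2 * frobNorm P * (η * frobNorm Ω + frobNorm P)
      ≤ c ^ 2 * (8 / 7 * (η * frobNorm Ω)) * (η * frobNorm Ω + 8 / 7 * (η * frobNorm Ω)) := by
    have hw : 0 ≤ η * frobNorm Ω := mul_nonneg hη (frobNorm_nonneg Ω)
    have hp : 0 ≤ frobNorm P := frobNorm_nonneg P
    have hPη : frobNorm P ≤ 8 / 7 * (η * frobNorm Ω) := by linarith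
    exact mul_le_mul (mul_le_mul_of_nonneg_left hPη (sq_nonneg c)) (by linarith) (by positivity)
      (by positivity)
  rw [show cayley (η • Ω) = 1 + P from (add_sub_cancel _ _).symm,
    trace_mul_conj_one_add_sub hA hD, hDAP, trace_mul_mul_commutator hA hD]
  nlinarith [abs_le.mp hE₁, abs_le.mp hE₂, sq_nonneg (η * c * frobNorm Ω)]

lemma rotA_transpose {Ce : Matrix (Fin n) (Fin n) ℝ} (hCe : Ceᵀ = Ce)
    (M : Matrix (Fin n) (Fin n) ℝ) : (rotA Ce M)ᵀ = rotA Ce M := by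
  rw [rotA, transpose_mul, transpose_mul, transpose_transpose, hCe, Matrix.mul_assoc]

lemma rotA_mul (Ce M Q : Matrix (Fin n) (Fin n) ℝ) :
    rotA Ce (M * Q) = Qᵀ * rotA Ce M * Q := by
  simp only [rotA, transpose_mul, Matrix.mul_assoc]

lemma specNorm_rotA_le (Ce : Matrix (Fin n) (Fin n) ℝ) {M : Matrix (Fin n) (Fin n) ℝ}
    (hM : Mᵀ * M = 1) : specNorm (rotA Ce M) ≤ specNorm Ce := by
  have hM1 := specNorm_le_one_of_transpose_mul_self hM
  have h : specNorm (rotA Ce M) ≤ specNorm Mᵀ * specNorm Ce * specNorm M :=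
    (specNorm_mul_le _ _).trans
      (mul_le_mul_of_nonneg_right (specNorm_mul_le _ _) (specNorm_nonneg M))
  rw [specNorm_transpose] at h
  have hmc := mul_nonneg (sub_nonneg.2 hM1) (specNorm_nonneg Ce)
  nlinarith [mul_nonneg hmc (specNorm_nonneg M)]

theorem discrete_lyapunov_descent_general {n : ℕ}
    (Ce M : Matrix (Fin n) (Fin n) ℝ) (hCe : Ceᵀ = Ce) (hM : Mᵀ * M = 1)
    (η : ℝ) (hη0 : 0 < η)
    (hη : η < 1 / ((2 * Real.sqrt n + 8) * specNorm Ce ^ 2)) :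
    objF Ce (M * cayley (η • genOmega Ce M))
      ≤ objF Ce M
        - η * (1 - η * ((2 * Real.sqrt n + 8) * specNorm Ce ^ 2) / 2)
          * frobNorm (genOmega Ce M) ^ 2 := by
  set c := specNorm Ce
  set A := rotA Ce M
  set Q := cayley (η • genOmega Ce M)
  have hA : Aᵀ = A := rotA_transpose hCe M
  -- `1 / 0 = 0`, so `hη` with `0 < η` excludes `L_C = 0`.
  have hL : 0 < (2 * Real.sqrt n + 8) * c ^ 2 := by
    refine lt_of_le_of_ne (by positivity) fun h => ?_
    rw [← h, div_zero] at hη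
    linarith
  have hηc : η * c ^ 2 ≤ 1 / 8 := by
    have := (lt_div_iff₀ hL).mp hη
    nlinarith [mul_nonneg (mul_nonneg hη0.le (sq_nonneg c)) (Real.sqrt_nonneg n)]
  have hQ : Qᵀ * Q = 1 := cayley_transpose_mul_self <| by
    rw [transpose_smul, genOmega, transpose_mul_sub_mul hA (diagPart_transpose A), smul_neg]
  calc objF Ce (M * Q) ≤ objF Ce M - (diagPart A * (Qᵀ * A * Q - A)).trace := by
        rw [objF, objF, rotA_mul]
        exact half_frobNorm_sub_diagPart_sq_le (frobNorm_conj_of_transpose_mul_self hQ A)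
    _ ≤ objF Ce M - η * (1 - 4 * η * c ^ 2) * frobNorm (genOmega Ce M) ^ 2 :=
        sub_le_sub_left (trace_diagPart_mul_cayley_conj_sub_ge hA (specNorm_rotA_le Ce hM)
          hη0.le hηc) _
    _ ≤ _ := by
        have : 0 ≤ η ^ 2 * c ^ 2 * Real.sqrt n * frobNorm (genOmega Ce M) ^ 2 := by positivity
        linarith

/-- **Discrete Lyapunov descent**: with `L_C = (2√n + 8)‖C_e‖₂²` and `0 < η < 1/L_C`,
the Cayley step satisfies `f(M Cay(ηΩ)) ≤ f(M) − η(1 − ηL_C/2)‖Ω‖_F²`. -/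
theorem discrete_lyapunov_descent {n : ℕ} (hn : 1 ≤ n)
    (Ce M : Matrix (Fin n) (Fin n) ℝ) (hCe : Ceᵀ = Ce) (hM : Mᵀ * M = 1)
    (η : ℝ) (hη0 : 0 < η)
    (hη : η < 1 / ((2 * Real.sqrt n + 8) * specNorm Ce ^ 2)) :
    objF Ce (M * cayley (η • genOmega Ce M))
      ≤ objF Ce M
        - η * (1 - η * ((2 * Real.sqrt n + 8) * specNorm Ce ^ 2) / 2)
          * frobNorm (genOmega Ce M) ^ 2 :=
  discrete_lyapunov_descent_general Ce M hCe hM η hη0 hη
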